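/- There do not exist a positive-edge-weighted tree T with four distinguished leaves a, b, c, d and reals 0 ≤ d_min ≤ d_max such that: d_min ≤ d_T(a,b) ≤ d_max, d_min ≤ d_T(c,d) ≤ d_max, d_T(b,c) < d_min, d_T(a,d) < d_min, d_T(a,c) > d_max, and d_T(b,d) > d_max. (Forbidden coloring f-c(2K_2)b.) -/

import Mathlib

open SimpleGraph

/-- A tree with positive real edge weights. -/
structure WTree (α : Type) where
  g : SimpleGraph α
  isTree : g.IsTree
  w : α → α → ℝ
  w_symm : ∀ a b, w a b = w b a
  w_pos : ∀ a b, g.Adj a b → 0 < w a b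

/-- The weighted distance between two vertices of a weighted tree: the sum of
the weights of the edges on the unique path between them. -/
noncomputable def WTree.dist {α : Type} (T : WTree α) (u v : α) : ℝ :=
  (((T.isTree.existsUnique_path u v).exists.choose).darts.map
    (fun d => T.w d.toProd.1 d.toProd.2)).sum

/-- A vertex of a weighted tree is a leaf if it has exactly one neighbor. -/
def WTree.IsLeaf {α : Type} (T : WTree α) (v : α) : Prop :=
  ∃! u, T.g.Adj v u

/-- `G = PCG(T, dmin, dmax)` via the leaf-assignment `f`. -/
def IsPCGWith {V β : Type} (G : SimpleGraph V) (T : WTree β) (f : V → β)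
    (dmin dmax : ℝ) : Prop :=
  Function.Injective f ∧ (∀ v, T.IsLeaf (f v)) ∧ (∀ b, T.IsLeaf b → ∃ v, f v = b) ∧
    ∀ u v : V, u ≠ v →
      (G.Adj u v ↔ dmin ≤ T.dist (f u) (f v) ∧ T.dist (f u) (f v) ≤ dmax)

/-- A graph is a pairwise compatibility graph. -/
def IsPCG {V : Type} (G : SimpleGraph V) : Prop :=
  ∃ (β : Type) (T : WTree β) (f : V → β) (dmin dmax : ℝ),
    0 ≤ dmin ∧ dmin ≤ dmax ∧ IsPCGWith G T f dmin dmax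

/-! A weighted tree satisfies the four-point condition
`d(a,c) + d(b,d) ≤ max (d(a,b) + d(c,d)) (d(a,d) + d(b,c))`.
To see it, project `b` and `d` onto the path from `a` to `c`, giving vertices `x` and `y`;
according to the order in which `x` and `y` occur on that path, one of the two sums on the right
exceeds the left-hand side by `d(x,b) + d(x,y) + d(y,d) - d(b,d) ≥ 0`.
The coloring would make the left-hand side exceed `2 dmax`, while the first sum on the right is
at most `2 dmax` and the second is below `2 dmin ≤ 2 dmax`. -/

namespace SimpleGraph.Walk

variable {V : Type*} {G : SimpleGraph V} {u v w : V}

lemma IsPath.append_of_support_inter {p : G.Walk u v} {q : G.Walk v w} (hp : p.IsPath)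
    (hq : q.IsPath) (h : ∀ x ∈ p.support, x ∈ q.support → x = v) : (p.append q).IsPath := by
  have hv : v ∉ q.support.tail := by
    have := hq.support_nodup
    rw [← q.cons_tail_support] at this
    exact (List.nodup_cons.1 this).1
  rw [isPath_def, support_append, List.nodup_append]
  refine ⟨hp.support_nodup, hq.support_nodup.sublist (List.tail_sublist _), ?_⟩
  rintro x hxp _ hxq rfl
  exact hv (h x hxp (List.mem_of_mem_tail hxq) ▸ hxq)

lemma exists_append_first_mem {S : Set V} (r : G.Walk u v) (hv : v ∈ S) :
    ∃ m ∈ S, ∃ (r₁ : G.Walk u m) (r₂ : G.Walk m v), r = r₁.append r₂ ∧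
      ∀ x ∈ r₁.support, x ∈ S → x = m := by
  induction r with
  | nil => exact ⟨_, hv, nil, nil, rfl, by simp⟩
  | @cons u _ _ h r ih =>
    by_cases hu : u ∈ S
    · exact ⟨u, hu, nil, cons h r, rfl, by simp⟩
    · obtain ⟨m, hm, r₁, r₂, rfl, hr₁⟩ := ih hv
      refine ⟨m, hm, cons h r₁, r₂, rfl, ?_⟩
      simp only [support_cons, List.mem_cons, forall_eq_or_imp]
      exact ⟨fun hu' => absurd hu' hu, hr₁⟩

end SimpleGraph.Walk

namespace WTree

variable {α : Type} (T : WTree α)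

noncomputable def walkWeight {u v : α} (p : T.g.Walk u v) : ℝ :=
  (p.darts.map fun d => T.w d.toProd.1 d.toProd.2).sum

lemma walkWeight_nonneg {u v : α} (p : T.g.Walk u v) : 0 ≤ T.walkWeight p :=
  List.sum_nonneg fun _ hx => by
    obtain ⟨d, -, rfl⟩ := List.mem_map.1 hx
    exact (T.w_pos _ _ d.adj).le

lemma walkWeight_append {u v x : α} (p : T.g.Walk u v) (q : T.g.Walk v x) :
    T.walkWeight (p.append q) = T.walkWeight p + T.walkWeight q := by
  simp [walkWeight]

lemma walkWeight_reverse {u v : α} (p : T.g.Walk u v) :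
    T.walkWeight p.reverse = T.walkWeight p := by
  simp [walkWeight, Function.comp_def, T.w_symm]

lemma dist_eq_walkWeight {u v : α} {p : T.g.Walk u v} (hp : p.IsPath) :
    T.dist u v = T.walkWeight p := by
  have h := T.isTree.existsUnique_path u v
  rw [dist, ← walkWeight, h.unique h.exists.choose_spec hp]

lemma dist_nonneg (u v : α) : 0 ≤ T.dist u v := by
  obtain ⟨p, hp⟩ := (T.isTree.existsUnique_path u v).exists
  exact T.dist_eq_walkWeight hp ▸ T.walkWeight_nonneg p

lemma dist_comm (u v : α) : T.dist u v = T.dist v u := by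
  obtain ⟨p, hp⟩ := (T.isTree.existsUnique_path u v).exists
  rw [T.dist_eq_walkWeight hp, T.dist_eq_walkWeight hp.reverse, walkWeight_reverse]

lemma dist_add_dist_of_mem_support {u v x : α} {p : T.g.Walk u v} (hp : p.IsPath)
    (hx : x ∈ p.support) : T.dist u x + T.dist x v = T.dist u v := by
  obtain ⟨p₁, p₂, hp₁, hp₂, rfl⟩ := hp.mem_support_iff_exists_append.1 hx
  rw [T.dist_eq_walkWeight hp₁, T.dist_eq_walkWeight hp₂, T.dist_eq_walkWeight hp,
    walkWeight_append]

/-- `m` is the first vertex of the path from `b` to `a` that lies on `q`. -/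
lemma exists_projection {a c : α} {q : T.g.Walk a c} (hq : q.IsPath) (b : α) :
    ∃ m ∈ q.support, T.dist b a = T.dist b m + T.dist m a ∧
      T.dist b c = T.dist b m + T.dist m c := by
  obtain ⟨r, hr⟩ := (T.isTree.existsUnique_path b a).exists
  obtain ⟨m, hm, r₁, r₂, rfl, hfirst⟩ := r.exists_append_first_mem (S := {x | x ∈ q.support})
    q.start_mem_support
  obtain ⟨q₁, q₂, -, hq₂, rfl⟩ := hq.mem_support_iff_exists_append.1 hm
  have hr₁ : r₁.IsPath := hr.of_append_left
  have hpath : (r₁.append q₂).IsPath := hr₁.append_of_support_inter hq₂ fun x hx hx₂ =>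
    hfirst x hx (Walk.mem_support_append_iff _ _ |>.2 (Or.inr hx₂))
  refine ⟨m, hm, (T.dist_add_dist_of_mem_support hr ?_).symm, ?_⟩
  · exact Walk.mem_support_append_iff _ _ |>.2 (Or.inl r₁.end_mem_support)
  · rw [T.dist_eq_walkWeight hpath, walkWeight_append, ← T.dist_eq_walkWeight hr₁,
      ← T.dist_eq_walkWeight hq₂]

lemma dist_triangle (u x v : α) : T.dist u v ≤ T.dist u x + T.dist x v := by
  obtain ⟨q, hq⟩ := (T.isTree.existsUnique_path u v).exists
  obtain ⟨m, hm, hxu, hxv⟩ := T.exists_projection hq x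
  have := T.dist_add_dist_of_mem_support hq hm
  linarith [T.dist_comm u x, T.dist_comm m u, T.dist_nonneg x m]

lemma dist_add_dist_add_dist_of_mem_support {a c x y : α} {q : T.g.Walk a c} (hq : q.IsPath)
    (hx : x ∈ q.support) (hy : y ∈ q.support) :
    T.dist a x + T.dist x y + T.dist y c = T.dist a c ∨
      T.dist a y + T.dist y x + T.dist x c = T.dist a c := by
  obtain ⟨q₁, q₂, hq₁, hq₂, rfl⟩ := hq.mem_support_iff_exists_append.1 hx
  have hsplit := T.dist_add_dist_of_mem_support hq hx
  rcases (Walk.mem_support_append_iff _ _).1 hy with hy | hy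
  · have := T.dist_add_dist_of_mem_support hq₁ hy
    right; linarith
  · have := T.dist_add_dist_of_mem_support hq₂ hy
    left; linarith

theorem four_point (a b c d : α) :
    T.dist a c + T.dist b d ≤ max (T.dist a b + T.dist c d) (T.dist a d + T.dist b c) := by
  obtain ⟨q, hq⟩ := (T.isTree.existsUnique_path a c).exists
  obtain ⟨x, hx, hxa, hxc⟩ := T.exists_projection hq b
  obtain ⟨y, hy, hya, hyc⟩ := T.exists_projection hq d
  have hbd : T.dist b d ≤ T.dist b x + T.dist x y + T.dist y d := by
    linarith [T.dist_triangle b x d, T.dist_triangle x y d]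
  have := T.dist_add_dist_of_mem_support hq hx
  have := T.dist_add_dist_of_mem_support hq hy
  have := T.dist_comm a b
  have := T.dist_comm a d
  have := T.dist_comm c d
  have := T.dist_comm x a
  have := T.dist_comm y a
  have := T.dist_comm x y
  have := T.dist_comm y d
  rcases T.dist_add_dist_add_dist_of_mem_support hq hx hy with h | h
  · exact le_max_of_le_right (by linarith)
  · exact le_max_of_le_left (by linarith)

end WTree

theorem forbidden_2K2_b : ¬ ∃ (β : Type) (T : WTree β) (a b c d : β) (dmin dmax : ℝ),
    T.IsLeaf a ∧ T.IsLeaf b ∧ T.IsLeaf c ∧ T.IsLeaf d ∧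
    a ≠ b ∧ a ≠ c ∧ a ≠ d ∧ b ≠ c ∧ b ≠ d ∧ c ≠ d ∧
    0 ≤ dmin ∧ dmin ≤ dmax ∧
    dmin ≤ T.dist a b ∧ T.dist a b ≤ dmax ∧
    dmin ≤ T.dist c d ∧ T.dist c d ≤ dmax ∧
    T.dist b c < dmin ∧ T.dist a d < dmin ∧
    dmax < T.dist a c ∧ dmax < T.dist b d := by
  rintro ⟨β, T, a, b, c, d, dmin, dmax, -, -, -, -, -, -, -, -, -, -,
    -, hle, -, hab, -, hcd, hbc, had, hac, hbd⟩
  exact (T.four_point a b c d).not_gt (max_lt (by linarith) (by linarith))
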